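/- arXiv:1807.02036 — 5 statements merged into one kernel-verified Lean document; each statement's English description precedes it below -/
import Mathlib

section
/- Exponential of a Jordan block: let B, P, N be n×n complex matrices and b ∈ ℂ, d ≥ 1 with P² = P, B·P = P·B, B·P = b·P + N, N·P = P·N = N, and N^d = 0. Then for every t ∈ ℝ, exp(tB)·P = e^{tb} · Σ_{k=0}^{d−1} (t^k/k!) · N^k · P. Consequently ‖exp(tB)·P‖ ≤ e^{t·Re(b)} · Σ_{k=0}^{d−1} (t^k/k!)·‖N^k P‖ for all t ≥ 0. -/
/-!
On the range of `P`, `t • B` acts as the scalar-plus-nilpotent `(t * b) • 1 + t • N`, which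
commutes with `P`. Comparing exponential series termwise, `exp (t • B) * P` therefore equals
`exp ((t * b) • 1 + t • N) * P = e^{tb} • exp (t • N) * P`, and the exponential series of the
nilpotent `t • N` stops after `d` terms. The norm bound is the triangle inequality.
-/

attribute [local instance] Matrix.linftyOpNormedRing Matrix.linftyOpNormedAlgebra

open NormedSpace Finset
open scoped Nat

theorem Commute.pow_mul_eq_pow_mul_of_mul_eq {M : Type*} [Monoid M] {x y p : M}
    (hy : Commute y p) (h : x * p = y * p) (k : ℕ) : x ^ k * p = y ^ k * p := by
  induction k with
  | zero => simp
  | succ k ih =>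
    rw [pow_succ, mul_assoc, h, hy.eq, ← mul_assoc, ih, mul_assoc, ← hy.eq, ← mul_assoc, ← pow_succ]

namespace NormedSpace

theorem exp_mul_eq_exp_mul_of_mul_eq {𝔸 : Type*} [NormedRing 𝔸] [NormedAlgebra ℚ 𝔸]
    [CompleteSpace 𝔸] {x y p : 𝔸} (hy : Commute y p) (h : x * p = y * p) :
    exp x * p = exp y * p := by
  have hx := (exp_series_hasSum_exp' (𝕂 := ℚ) x).mul_right p
  simp_rw [smul_mul_assoc, hy.pow_mul_eq_pow_mul_of_mul_eq h, ← smul_mul_assoc] at hx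
  exact hx.unique ((exp_series_hasSum_exp' y).mul_right p)

variable {𝕂 𝔸 : Type*} [RCLike 𝕂] [NormedRing 𝔸] [NormedAlgebra 𝕂 𝔸] [CompleteSpace 𝔸]

variable (𝕂) in
theorem exp_eq_sum_range_of_pow_eq_zero {x : 𝔸} {d : ℕ} (hx : x ^ d = 0) :
    exp x = ∑ k ∈ range d, (k !⁻¹ : 𝕂) • x ^ k := by
  refine (exp_series_hasSum_exp' x).unique (hasSum_sum_of_ne_finset_zero fun k hk ↦ ?_)
  rw [pow_eq_zero_of_le (by simpa using hk) hx, smul_zero]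

theorem exp_smul_eq_sum_range_of_pow_eq_zero (c : 𝕂) {x : 𝔸} {d : ℕ} (hx : x ^ d = 0) :
    exp (c • x) = ∑ k ∈ range d, (c ^ k / k !) • x ^ k := by
  rw [exp_eq_sum_range_of_pow_eq_zero 𝕂 (by rw [smul_pow, hx, smul_zero])]
  simp_rw [smul_pow, smul_smul, div_eq_inv_mul]

theorem exp_algebraMap_add (c : 𝕂) (x : 𝔸) : exp (algebraMap 𝕂 𝔸 c + x) = exp c • exp x := by
  let +nondep : NormedAlgebra ℚ 𝔸 := .restrictScalars ℚ 𝕂 𝔸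
  rw [exp_add_of_commute (Algebra.commutes c x), ← algebraMap_exp_comm, Algebra.smul_def]

theorem exp_smul_mul_eq_of_mul_eq_smul_add {B P N : 𝔸} {b : 𝕂} {d : ℕ}
    (hBP : B * P = b • P + N) (hNP : N * P = N) (hPN : P * N = N) (hN : N ^ d = 0) (s : 𝕂) :
    exp (s • B) * P = exp (s * b) • ∑ k ∈ range d, (s ^ k / k !) • (N ^ k * P) := by
  have hcomm : Commute (algebraMap 𝕂 𝔸 (s * b) + s • N) P := by
    refine (Algebra.commute_algebraMap_left _ P).add_left ?_
    rw [commute_iff_eq, smul_mul_assoc, mul_smul_comm, hNP, hPN]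
  have h : s • B * P = (algebraMap 𝕂 𝔸 (s * b) + s • N) * P := by
    rw [smul_mul_assoc, hBP, add_mul, ← Algebra.smul_def, smul_mul_assoc, hNP, smul_add, smul_smul]
  let +nondep : NormedAlgebra ℚ 𝔸 := .restrictScalars ℚ 𝕂 𝔸
  rw [exp_mul_eq_exp_mul_of_mul_eq hcomm h, exp_algebraMap_add,
    exp_smul_eq_sum_range_of_pow_eq_zero s hN, smul_mul_assoc, sum_mul]
  simp_rw [smul_mul_assoc]

end NormedSpace

theorem exp_jordan_block_general
    {n : ℕ} (B P N : Matrix (Fin n) (Fin n) ℂ) (b : ℂ) (d : ℕ)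
    (hBP : B * P = b • P + N)
    (hNP : N * P = N) (hPN : P * N = N)
    (hNnil : N ^ d = 0) :
    (∀ t : ℝ,
        exp (t • B) * P =
          Complex.exp ((t : ℂ) * b) •
            ∑ k ∈ range d, (((t : ℂ) ^ k / (Nat.factorial k : ℂ)) • (N ^ k * P))) ∧
      ∀ t : ℝ, 0 ≤ t →
        ‖exp (t • B) * P‖ ≤
          Real.exp (t * b.re) *
            ∑ k ∈ range d, t ^ k / (Nat.factorial k : ℝ) * ‖N ^ k * P‖ := by
  have formula (t : ℝ) : exp (t • B) * P = Complex.exp (t * b) •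
      ∑ k ∈ range d, (((t : ℂ) ^ k / (Nat.factorial k : ℂ)) • (N ^ k * P)) := by
    rw [← Complex.coe_smul, Complex.exp_eq_exp_ℂ]
    exact exp_smul_mul_eq_of_mul_eq_smul_add hBP hNP hPN hNnil _
  refine ⟨formula, fun t ht ↦ ?_⟩
  rw [formula, norm_smul, Complex.norm_exp, Complex.re_ofReal_mul]
  gcongr
  refine (norm_sum_le _ _).trans (sum_le_sum fun k _ ↦ ?_)
  rw [norm_smul]
  gcongr
  rw [← Complex.ofReal_pow, ← Complex.ofReal_natCast, ← Complex.ofReal_div,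
    Complex.norm_of_nonneg (by positivity)]

/-- Exponential of a Jordan block: if `P² = P`, `B` commutes with `P`,
`B·P = b·P + N`, `N·P = P·N = N` and `N^d = 0`, then
`exp(tB)·P = e^{tb} Σ_{k<d} (t^k/k!) N^k P`, and consequently
`‖exp(tB)·P‖ ≤ e^{t·Re b} Σ_{k<d} (t^k/k!)·‖N^k P‖` for `t ≥ 0`. -/
theorem exp_jordan_block
    {n : ℕ} (B P N : Matrix (Fin n) (Fin n) ℂ) (b : ℂ) (d : ℕ) (hd : 1 ≤ d)
    (hPidem : P * P = P)
    (hcomm : B * P = P * B)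
    (hBP : B * P = b • P + N)
    (hNP : N * P = N) (hPN : P * N = N)
    (hNnil : N ^ d = 0) :
    (∀ t : ℝ,
        exp (t • B) * P =
          Complex.exp ((t : ℂ) * b) •
            ∑ k ∈ range d, (((t : ℂ) ^ k / (Nat.factorial k : ℂ)) • (N ^ k * P))) ∧
      ∀ t : ℝ, 0 ≤ t →
        ‖exp (t • B) * P‖ ≤
          Real.exp (t * b.re) *
            ∑ k ∈ range d, t ^ k / (Nat.factorial k : ℝ) * ‖N ^ k * P‖ :=
  exp_jordan_block_general B P N b d hBP hNP hPN hNnil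
end

section
/- Adiabatic theorem on a peripheral spectral block: under the spectral hypotheses on B, assume M ≥ 1 satisfies ‖exp(tB)‖ ≤ M for all t ≥ 0, and fix an index ℓ with Re(b_ℓ) = 0 (so N_ℓ = 0). Then for every T > 0 there exists a constant c ≥ 0 such that for all γ ≥ 1 and all t ∈ [0, T], ‖exp(t(γB + C))·P_ℓ − exp(t(γB + C_Z))·P_ℓ‖ ≤ c/γ. -/
attribute [local instance] Matrix.linftyOpNormedRing Matrix.linftyOpNormedAlgebra

open NormedSpace Finset

noncomputable section

/-!
By Duhamel's formula, `exp (t • (γ • B + C)) * P ℓ - exp (t • (γ • B + CZ)) * P ℓ` is an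
integral whose integrand carries the off-diagonal block `(C - CZ) * P ℓ = C * P ℓ - P ℓ * C * P ℓ`.
That block is a commutator `B * Q - Q * B`: on `P k * C * P ℓ` with `k ≠ ℓ`, the map
`X ↦ B * X - X * B` acts as multiplication by the unit `N k + (b k - b ℓ)`. Running Duhamel's
formula once more for `Q` trades the factor `γ` in front of `B * Q - Q * B` for boundary terms and
an integral that no longer involve `γ`, so `γ` times the difference stays bounded. The propagators
themselves are bounded on `[0, T]` uniformly in `γ` by Grönwall's inequality, since
`‖exp (s • γ • B)‖ ≤ M`.
-/

theorem add_mul_gronwallBound_zero (K ε x : ℝ) :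
    ε + K * gronwallBound 0 K ε x = ε * Real.exp (K * x) := by
  rcases eq_or_ne K 0 with rfl | hK
  · simp
  · rw [gronwallBound_of_K_ne_0 hK]
    field_simp
    ring

theorem le_mul_exp_of_le_add_mul_integral {u : ℝ → ℝ} {ε K t : ℝ} (hu : Continuous u)
    (hK : 0 ≤ K) (ht : 0 ≤ t)
    (h : ∀ τ ∈ Set.Icc 0 t, u τ ≤ ε + K * ∫ s in (0 : ℝ)..τ, u s) :
    u t ≤ ε * Real.exp (K * t) := by
  have hderiv (τ : ℝ) : HasDerivAt (fun τ => ∫ s in (0 : ℝ)..τ, u s) (u τ) τ :=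
    hu.integral_hasStrictDerivAt 0 τ |>.hasDerivAt
  have hint : (∫ s in (0 : ℝ)..t, u s) ≤ gronwallBound 0 K ε t := by
    simpa using le_gronwallBound_of_liminf_deriv_right_le
      (fun τ _ => (hderiv τ).continuousAt.continuousWithinAt)
      (fun τ _ _ hr => (hderiv τ).hasDerivWithinAt.liminf_right_slope_le hr)
      (by simp) (fun τ hτ => by linarith [h τ (Set.Ico_subset_Icc_self hτ)])
      t ⟨ht, le_rfl⟩
  calc u t ≤ ε + K * ∫ s in (0 : ℝ)..t, u s := h t ⟨ht, le_rfl⟩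
    _ ≤ ε + K * gronwallBound 0 K ε t := by gcongr
    _ = ε * Real.exp (K * t) := add_mul_gronwallBound_zero K ε t

section NormedAlgebra

variable {𝔸 : Type*} [NormedRing 𝔸] [NormedAlgebra ℝ 𝔸] [CompleteSpace 𝔸]

theorem continuous_exp_smul (A : 𝔸) : Continuous fun s : ℝ => exp (s • A) :=
  continuous_iff_continuousAt.2 fun s => (hasDerivAt_exp_smul_const A s).continuousAt

theorem hasDerivAt_exp_smul_mul_exp_smul (A A' W Z : 𝔸) (t s : ℝ) :
    HasDerivAt (fun s : ℝ => exp ((t - s) • A) * W * exp (s • A') * Z)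
      (exp ((t - s) • A) * (W * A' - A * W) * exp (s • A') * Z) s := by
  have hleft : HasDerivAt (fun s : ℝ => exp ((t - s) • A)) (-(exp ((t - s) • A) * A)) s := by
    simpa only [Function.comp_def, neg_one_smul] using
      (hasDerivAt_exp_smul_const A (t - s)).scomp s ((hasDerivAt_id s).const_sub t)
  refine (((hleft.mul_const W).mul (hasDerivAt_exp_smul_const' A' s)).mul_const Z).congr_deriv ?_
  noncomm_ring

theorem continuous_exp_smul_mul_exp_smul (A A' W : 𝔸) (t : ℝ) :
    Continuous (fun s : ℝ => exp ((t - s) • A) * W * exp (s • A')) :=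
  (((continuous_exp_smul A).comp (continuous_sub_left t)).mul continuous_const).mul
    (continuous_exp_smul A')

/-- Duhamel's formula. -/
theorem integral_exp_smul_mul_exp_smul (A A' W Z : 𝔸) (t : ℝ) :
    ∫ s in (0 : ℝ)..t, exp ((t - s) • A) * (W * A' - A * W) * exp (s • A') * Z
      = W * exp (t • A') * Z - exp (t • A) * W * Z := by
  rw [intervalIntegral.integral_eq_sub_of_hasDerivAt
    (fun s _ => hasDerivAt_exp_smul_mul_exp_smul A A' W Z t s)
    (((continuous_exp_smul_mul_exp_smul A A' _ t).mul_const Z).intervalIntegrable 0 t)]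
  simp

theorem norm_exp_smul_add_le {A D : 𝔸} {M t : ℝ} (hA : ∀ s : ℝ, 0 ≤ s → ‖exp (s • A)‖ ≤ M)
    (ht : 0 ≤ t) : ‖exp (t • (A + D))‖ ≤ M * Real.exp (M * ‖D‖ * t) := by
  have hM : 0 ≤ M := (norm_nonneg _).trans (hA 0 le_rfl)
  refine le_mul_exp_of_le_add_mul_integral (u := fun s => ‖exp (s • (A + D))‖)
    (continuous_exp_smul _).norm (by positivity) ht fun τ hτ => ?_
  have hduhamel := integral_exp_smul_mul_exp_smul A (A + D) 1 1 τ
  simp only [one_mul, mul_one, add_sub_cancel_left] at hduhamel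
  have hbound : ∀ s ∈ Set.Icc 0 τ, ‖exp ((τ - s) • A) * D * exp (s • (A + D))‖
      ≤ M * ‖D‖ * ‖exp (s • (A + D))‖ := fun s hs => by
    grw [norm_mul₃_le, hA (τ - s) (by linarith [hs.2])]
  calc ‖exp (τ • (A + D))‖
      ≤ ‖exp (τ • A)‖ + ‖∫ s in (0 : ℝ)..τ, exp ((τ - s) • A) * D * exp (s • (A + D))‖ := by
        rw [hduhamel]; exact norm_le_insert' _ _
    _ ≤ M + ∫ s in (0 : ℝ)..τ, M * ‖D‖ * ‖exp (s • (A + D))‖ := by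
        gcongr
        · exact hA τ hτ.1
        · refine (intervalIntegral.norm_integral_le_integral_norm hτ.1).trans ?_
          refine intervalIntegral.integral_mono_on hτ.1 ?_ ?_ hbound
          · exact ((continuous_exp_smul_mul_exp_smul A (A + D) D τ).norm.intervalIntegrable 0 τ)
          · exact (continuous_const.mul (continuous_exp_smul _).norm).intervalIntegrable 0 τ
    _ = M + M * ‖D‖ * ∫ s in (0 : ℝ)..τ, ‖exp (s • (A + D))‖ := by
        rw [intervalIntegral.integral_const_mul]

variable {B C C' P Q : 𝔸}

theorem smul_exp_mul_sub_exp_mul_eq (hP : IsIdempotentElem P) (hPB : Commute P B)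
    (hPC' : Commute P C') (hQ : B * Q - Q * B = (C - C') * P) (γ t : ℝ) :
    γ • (exp (t • (γ • B + C)) * P - exp (t • (γ • B + C')) * P)
      = exp (t • (γ • B + C)) * Q * P - Q * exp (t • (γ • B + C')) * P
        + ∫ s in (0 : ℝ)..t,
            exp ((t - s) • (γ • B + C)) * (Q * C' - C * Q) * exp (s • (γ • B + C')) * P := by
  set A := γ • B + C
  set A' := γ • B + C'
  have hPexp (s : ℝ) : P * exp (s • A') = exp (s • A') * P :=
    (((hPB.smul_right γ).add_right hPC').smul_right s).exp_right.eq
  have hQA : Q * A' - A * Q = γ • ((C' - C) * P) + (Q * C' - C * Q) := by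
    rw [← neg_sub C, neg_mul, ← hQ]
    simp only [A, A', mul_add, add_mul, mul_smul_comm, smul_mul_assoc]
    module
  have hintegrand (s : ℝ) :
      exp ((t - s) • A) * (Q * A' - A * Q) * exp (s • A') * P
        = γ • (exp ((t - s) • A) * (1 * A' - A * 1) * exp (s • A') * P)
          + exp ((t - s) • A) * (Q * C' - C * Q) * exp (s • A') * P := by
    have hPexpP : (C' - C) * P * exp (s • A') * P = (A' - A) * exp (s • A') * P := by
      rw [mul_assoc _ P, hPexp, mul_assoc, mul_assoc, hP.eq, ← mul_assoc]
      simp only [A, A', add_sub_add_left_eq_sub]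
    rw [hQA, one_mul, mul_one, mul_add, add_mul, add_mul, mul_smul_comm, smul_mul_assoc,
      smul_mul_assoc, mul_assoc _ ((C' - C) * P), mul_assoc _ ((C' - C) * P * _), hPexpP,
      ← mul_assoc, ← mul_assoc]
  have hduhamel := integral_exp_smul_mul_exp_smul A A' Q P t
  rw [intervalIntegral.integral_congr fun s _ => hintegrand s,
    intervalIntegral.integral_add, intervalIntegral.integral_smul,
    integral_exp_smul_mul_exp_smul A A' 1 P t] at hduhamel
  · rw [← neg_sub (Q * exp (t • A') * P), ← hduhamel]
    simp only [one_mul, mul_one, smul_sub]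
    abel
  · exact (((continuous_exp_smul_mul_exp_smul A A' _ t).mul_const P).const_smul γ).intervalIntegrable
      0 t
  · exact ((continuous_exp_smul_mul_exp_smul A A' _ t).mul_const P).intervalIntegrable 0 t

theorem norm_smul_exp_mul_sub_exp_mul_le (hP : IsIdempotentElem P) (hPB : Commute P B)
    (hPC' : Commute P C') (hQ : B * Q - Q * B = (C - C') * P) {γ t K : ℝ} (ht : 0 ≤ t)
    (hA : ∀ τ ∈ Set.Icc 0 t, ‖exp (τ • (γ • B + C))‖ ≤ K)
    (hA' : ∀ τ ∈ Set.Icc 0 t, ‖exp (τ • (γ • B + C'))‖ ≤ K) :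
    ‖γ • (exp (t • (γ • B + C)) * P - exp (t • (γ • B + C')) * P)‖
      ≤ (2 * K * ‖Q‖ + t * K ^ 2 * ‖Q * C' - C * Q‖) * ‖P‖ := by
  have hK : 0 ≤ K := (norm_nonneg _).trans (hA 0 ⟨le_rfl, ht⟩)
  have hintegrand : ∀ s ∈ Set.uIoc 0 t,
      ‖exp ((t - s) • (γ • B + C)) * (Q * C' - C * Q) * exp (s • (γ • B + C')) * P‖
        ≤ K ^ 2 * ‖Q * C' - C * Q‖ * ‖P‖ := fun s hs => by
    rw [Set.uIoc_of_le ht] at hs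
    grw [norm_mul_le, norm_mul₃_le, hA (t - s) ⟨by linarith [hs.2], by linarith [hs.1]⟩,
      hA' s ⟨hs.1.le, hs.2⟩]
    exact le_of_eq (by ring)
  have hintegral := intervalIntegral.norm_integral_le_of_norm_le_const hintegrand
  rw [sub_zero, abs_of_nonneg ht] at hintegral
  rw [smul_exp_mul_sub_exp_mul_eq hP hPB hPC' hQ]
  grw [norm_add_le, norm_sub_le, norm_mul₃_le, norm_mul₃_le, hintegral, hA t ⟨ht, le_rfl⟩,
    hA' t ⟨ht, le_rfl⟩]
  exact le_of_eq (by ring)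

end NormedAlgebra

theorem exists_mul_sub_mul_eq_of_isNilpotent {𝕜 𝔸 : Type*} [Field 𝕜] [Ring 𝔸] [Algebra 𝕜 𝔸]
    {B X N : 𝔸} {β μ : 𝕜} (hμ : μ ≠ 0) (hN : IsNilpotent N) (hBN : Commute B N)
    (hXB : X * B = β • X) (hBX : B * X = (β + μ) • X + N * X) :
    ∃ Q, B * Q - Q * B = X := by
  obtain ⟨u, hu⟩ := hN.isUnit_add_right_of_commute
    ((isUnit_iff_ne_zero.2 hμ).map (algebraMap 𝕜 𝔸)) (Algebra.commute_algebraMap_right μ N)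
  have hBu : Commute B u := hu ▸ hBN.add_right (Algebra.commute_algebraMap_right μ B)
  have huX : u * X = B * X - X * B := by
    rw [hu, hXB, hBX, add_mul, ← Algebra.smul_def, add_smul]
    abel
  refine ⟨↑u⁻¹ * X, ?_⟩
  rw [← mul_assoc, hBu.units_inv_right.eq, mul_assoc, mul_assoc, ← mul_sub, ← huX,
    Units.inv_mul_cancel_left]

structure IsSpectralDecomposition {𝕜 𝔸 ι : Type*} [Field 𝕜] [Ring 𝔸] [Algebra 𝕜 𝔸] [Fintype ι]
    [DecidableEq ι] (B : 𝔸) (b : ι → 𝕜) (P N : ι → 𝔸) : Prop where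
  proj_mul_proj : ∀ k l, P k * P l = if k = l then P k else 0
  sum_proj : ∑ k, P k = 1
  proj_mul_nil : ∀ k l, P k * N l = if k = l then N k else 0
  nil_mul_proj : ∀ k l, N l * P k = if k = l then N k else 0
  isNilpotent_nil : ∀ k, IsNilpotent (N k)
  eq_sum : B = ∑ k, (b k • P k + N k)

namespace IsSpectralDecomposition

variable {𝕜 𝔸 ι : Type*} [Field 𝕜] [Ring 𝔸] [Algebra 𝕜 𝔸] [Fintype ι] [DecidableEq ι]
  {B : 𝔸} {b : ι → 𝕜} {P N : ι → 𝔸} (h : IsSpectralDecomposition B b P N)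
include h

theorem commute_proj_proj (k l : ι) : Commute (P k) (P l) := by
  rw [Commute, SemiconjBy, h.proj_mul_proj, h.proj_mul_proj]
  split_ifs <;> simp_all

theorem commute_proj_nil (k l : ι) : Commute (P k) (N l) :=
  (h.proj_mul_nil k l).trans (h.nil_mul_proj k l).symm

theorem isIdempotentElem_proj (k : ι) : IsIdempotentElem (P k) :=
  (h.proj_mul_proj k k).trans (if_pos rfl)

theorem nil_mul_self_proj (k : ι) : N k * P k = N k := by
  simpa using h.nil_mul_proj k k

theorem commute_nil_nil (k l : ι) : Commute (N k) (N l) := by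
  rcases eq_or_ne k l with rfl | hkl
  · exact Commute.refl _
  · have hzero (i j : ι) (hij : i ≠ j) : N i * N j = 0 := by
      rw [← h.nil_mul_self_proj i, mul_assoc, h.proj_mul_nil, if_neg hij, mul_zero]
    rw [Commute, SemiconjBy, hzero k l hkl, hzero l k hkl.symm]

theorem commute_proj (k : ι) : Commute B (P k) := by
  rw [h.eq_sum]
  exact Commute.sum_left _ _ _ fun i _ =>
    ((h.commute_proj_proj i k).smul_left _).add_left (h.commute_proj_nil k i).symm

theorem commute_nil (k : ι) : Commute B (N k) := by
  rw [h.eq_sum]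
  exact Commute.sum_left _ _ _ fun i _ =>
    ((h.commute_proj_nil i k).smul_left _).add_left (h.commute_nil_nil i k)

theorem mul_proj (k : ι) : B * P k = b k • P k + N k := by
  simp_rw [h.eq_sum, Finset.sum_mul, add_mul, smul_mul_assoc, h.proj_mul_proj, h.nil_mul_proj,
    smul_ite, smul_zero, Finset.sum_add_distrib, Finset.sum_ite_eq, Finset.sum_ite_eq',
    Finset.mem_univ, if_true]

theorem exists_mul_sub_mul_eq_mul_proj_sub (hb : Function.Injective b) {ℓ : ι} (hℓ : N ℓ = 0)
    (C : 𝔸) : ∃ Q, B * Q - Q * B = C * P ℓ - P ℓ * C * P ℓ := by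
  have hoff : ∀ k ∈ univ.erase ℓ, ∃ Q, B * Q - Q * B = P k * C * P ℓ := fun k hk => by
    refine exists_mul_sub_mul_eq_of_isNilpotent (β := b ℓ) (μ := b k - b ℓ)
      (sub_ne_zero.2 (hb.ne (ne_of_mem_erase hk))) (h.isNilpotent_nil k) (h.commute_nil k) ?_ ?_
    · rw [mul_assoc, ← (h.commute_proj ℓ).eq, h.mul_proj, hℓ, add_zero, mul_smul_comm]
    · rw [← mul_assoc, ← mul_assoc, h.mul_proj, add_sub_cancel, add_mul, add_mul, smul_mul_assoc,
        smul_mul_assoc, ← mul_assoc, ← mul_assoc, h.nil_mul_self_proj]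
  choose! Q hQ using hoff
  refine ⟨∑ k ∈ univ.erase ℓ, Q k, ?_⟩
  rw [Finset.mul_sum, Finset.sum_mul, ← Finset.sum_sub_distrib, Finset.sum_congr rfl hQ,
    Finset.sum_erase_eq_sub (mem_univ ℓ), ← Finset.sum_mul, ← Finset.sum_mul, h.sum_proj, one_mul]

theorem proj_mul_sum_proj_mul_proj {S : Finset ι} {ℓ : ι} (hℓ : ℓ ∈ S) (C : 𝔸) :
    P ℓ * ∑ k ∈ S, P k * C * P k = P ℓ * C * P ℓ := by
  simp_rw [Finset.mul_sum, ← mul_assoc, h.proj_mul_proj, ite_mul, zero_mul,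
    Finset.sum_ite_eq, if_pos hℓ]

theorem sum_proj_mul_proj_mul_proj {S : Finset ι} {ℓ : ι} (hℓ : ℓ ∈ S) (C : 𝔸) :
    (∑ k ∈ S, P k * C * P k) * P ℓ = P ℓ * C * P ℓ := by
  simp_rw [Finset.sum_mul, mul_assoc (_ * C), h.proj_mul_proj, mul_ite, mul_zero,
    Finset.sum_ite_eq', if_pos hℓ]

end IsSpectralDecomposition

theorem adiabatic_peripheral_block_general
    {n m : ℕ}
    (B C : Matrix (Fin n) (Fin n) ℂ)
    (b : Fin m → ℂ) (hb : Function.Injective b)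
    (P N : Fin m → Matrix (Fin n) (Fin n) ℂ)
    (hPP : ∀ k l, P k * P l = if k = l then P k else 0)
    (hPsum : ∑ k, P k = 1)
    (hPN : ∀ k l, P k * N l = if k = l then N k else 0)
    (hNP : ∀ k l, N l * P k = if k = l then N k else 0)
    (hNnil : ∀ k, IsNilpotent (N k))
    (hB : B = ∑ k, (b k • P k + N k))
    (hsemi : ∀ k, (b k).re = 0 → N k = 0)
    (M : ℝ)
    (hMbound : ∀ t : ℝ, 0 ≤ t → ‖exp (t • B)‖ ≤ M)
    (ℓ : Fin m) (hℓ : (b ℓ).re = 0)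
    (CZ : Matrix (Fin n) (Fin n) ℂ)
    (hCZ : CZ = ∑ k ∈ univ.filter fun k => (b k).re = 0, P k * C * P k) :
    ∀ T > (0 : ℝ), ∃ c ≥ (0 : ℝ), ∀ γ ≥ (1 : ℝ), ∀ t ∈ Set.Icc (0 : ℝ) T,
      ‖exp (t • ((γ : ℂ) • B + C)) * P ℓ - exp (t • ((γ : ℂ) • B + CZ)) * P ℓ‖
        ≤ c / γ := by
  intro T _
  have hspec : IsSpectralDecomposition B b P N := ⟨hPP, hPsum, hPN, hNP, hNnil, hB⟩
  have hℓS : ℓ ∈ univ.filter fun k => (b k).re = 0 := mem_filter.2 ⟨mem_univ ℓ, hℓ⟩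
  have hCZP : CZ * P ℓ = P ℓ * C * P ℓ := hCZ ▸ hspec.sum_proj_mul_proj_mul_proj hℓS C
  have hPCZ : Commute (P ℓ) CZ := (hCZ ▸ hspec.proj_mul_sum_proj_mul_proj hℓS C).trans hCZP.symm
  obtain ⟨Q, hQ⟩ := hspec.exists_mul_sub_mul_eq_mul_proj_sub hb (hsemi ℓ hℓ) C
  have hM : 0 ≤ M := (norm_nonneg _).trans (hMbound 0 le_rfl)
  set K := M * Real.exp (M * (‖C‖ + ‖CZ‖) * T) with hK
  refine ⟨(2 * K * ‖Q‖ + T * K ^ 2 * ‖Q * CZ - C * Q‖) * ‖P ℓ‖, by positivity, fun γ hγ t ht => ?_⟩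
  have hγB (s : ℝ) (hs : 0 ≤ s) : ‖exp (s • γ • B)‖ ≤ M := by
    rw [smul_smul]
    exact hMbound _ (by positivity)
  have hexp (D : Matrix (Fin n) (Fin n) ℂ) (hD : ‖D‖ ≤ ‖C‖ + ‖CZ‖) :
      ∀ τ ∈ Set.Icc 0 t, ‖exp (τ • (γ • B + D))‖ ≤ K := fun τ hτ => by
    refine (norm_exp_smul_add_le hγB hτ.1).trans ?_
    rw [hK]
    gcongr
    exacts [hτ.1, hτ.2.trans ht.2]
  have hest := norm_smul_exp_mul_sub_exp_mul_le (hspec.isIdempotentElem_proj ℓ)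
    (hspec.commute_proj ℓ).symm hPCZ (by rw [hQ, sub_mul, hCZP]) ht.1
    (hexp C (by simp)) (hexp CZ (by simp))
  rw [norm_smul, Real.norm_of_nonneg (by linarith)] at hest
  simp only [Complex.coe_smul]
  rw [le_div_iff₀ (by linarith), mul_comm]
  refine hest.trans ?_
  grw [ht.2]

/-- Adiabatic theorem on a peripheral spectral block. -/
theorem adiabatic_peripheral_block
    {n m : ℕ} (hn : 1 ≤ n) (hm : 1 ≤ m)
    (B C : Matrix (Fin n) (Fin n) ℂ)
    (b : Fin m → ℂ) (hb : Function.Injective b)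
    (P N : Fin m → Matrix (Fin n) (Fin n) ℂ)
    (hPP : ∀ k l, P k * P l = if k = l then P k else 0)
    (hPsum : ∑ k, P k = 1)
    (hPN : ∀ k l, P k * N l = if k = l then N k else 0)
    (hNP : ∀ k l, N l * P k = if k = l then N k else 0)
    (hNnil : ∀ k, IsNilpotent (N k))
    (hB : B = ∑ k, (b k • P k + N k))
    (hRe : ∀ k, (b k).re ≤ 0)
    (hsemi : ∀ k, (b k).re = 0 → N k = 0)
    (M : ℝ) (hM : 1 ≤ M)
    (hMbound : ∀ t : ℝ, 0 ≤ t → ‖exp (t • B)‖ ≤ M)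
    (ℓ : Fin m) (hℓ : (b ℓ).re = 0)
    (CZ : Matrix (Fin n) (Fin n) ℂ)
    (hCZ : CZ = ∑ k ∈ univ.filter fun k => (b k).re = 0, P k * C * P k) :
    ∀ T > (0 : ℝ), ∃ c ≥ (0 : ℝ), ∀ γ ≥ (1 : ℝ), ∀ t ∈ Set.Icc (0 : ℝ) T,
      ‖exp (t • ((γ : ℂ) • B + C)) * P ℓ - exp (t • ((γ : ℂ) • B + CZ)) * P ℓ‖
        ≤ c / γ :=
  adiabatic_peripheral_block_general B C b hb P N hPP hPsum hPN hNP hNnil hB hsemi M hMbound ℓ hℓ CZ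
    hCZ
end
end

section
/- Zeno projection of a Hamiltonian commutator: let P_1, …, P_r be n×n complex matrices with P_m P_n = δ_{mn} P_n and Σ_n P_n = I, and let ε_1, …, ε_r be distinct real numbers. For each ω in Ω = {ε_m − ε_n} define 𝒫_ω(A) = Σ_{(m,n) : ε_m − ε_n = ω} P_m A P_n. Then for any n×n complex matrix H, Σ_{ω ∈ Ω} 𝒫_ω ∘ [H, •] ∘ 𝒫_ω = [H_Z, •], where H_Z = Σ_n P_n H P_n. -/
open Finset

noncomputable section

/-- Zeno projection of a Hamiltonian commutator:
`Σ_{ω ∈ Ω} 𝒬 ω ∘ [H, •] ∘ 𝒬 ω = [H_Z, •]` with `H_Z = Σ_n P n H P n`. -/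
theorem zeno_projection_of_commutator
    {n r : ℕ}
    (P : Fin r → Matrix (Fin n) (Fin n) ℂ)
    (hPP : ∀ p q, P p * P q = if p = q then P p else 0)
    (hPsum : ∑ p, P p = 1)
    (ε : Fin r → ℝ) (hε : Function.Injective ε)
    (Ω : Finset ℝ)
    (hΩ : Ω = Finset.image (fun pq : Fin r × Fin r => ε pq.1 - ε pq.2) Finset.univ)
    (𝒬 : ℝ → Module.End ℂ (Matrix (Fin n) (Fin n) ℂ))
    (h𝒬 : ∀ ω : ℝ, 𝒬 ω =
      ∑ pq ∈ univ.filter fun pq : Fin r × Fin r => ε pq.1 - ε pq.2 = ω,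
        LinearMap.mulLeft ℂ (P pq.1) * LinearMap.mulRight ℂ (P pq.2))
    (H : Matrix (Fin n) (Fin n) ℂ) :
    ∑ ω ∈ Ω, 𝒬 ω * (LinearMap.mulLeft ℂ H - LinearMap.mulRight ℂ H) * 𝒬 ω
      = LinearMap.mulLeft ℂ (∑ p, P p * H * P p)
          - LinearMap.mulRight ℂ (∑ p, P p * H * P p) := by
  classical
  -- generic composition identity
  have hterm : ∀ a b c d : Fin r,
      (LinearMap.mulLeft ℂ (P a) * LinearMap.mulRight ℂ (P b))
        * (LinearMap.mulLeft ℂ H - LinearMap.mulRight ℂ H)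
        * (LinearMap.mulLeft ℂ (P c) * LinearMap.mulRight ℂ (P d))
      = LinearMap.mulLeft ℂ (P a * H * P c) * LinearMap.mulRight ℂ (P d * P b)
        - LinearMap.mulLeft ℂ (P a * P c) * LinearMap.mulRight ℂ (P d * H * P b) := by
    intro a b c d
    apply LinearMap.ext; intro A
    simp only [Module.End.mul_apply, LinearMap.sub_apply, LinearMap.mulLeft_apply,
      LinearMap.mulRight_apply, mul_sub, sub_mul, Matrix.mul_assoc]
  have key : ∀ ω : ℝ,
      𝒬 ω * (LinearMap.mulLeft ℂ H - LinearMap.mulRight ℂ H) * 𝒬 ω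
        = ∑ pq ∈ univ.filter fun pq : Fin r × Fin r => ε pq.1 - ε pq.2 = ω,
            (LinearMap.mulLeft ℂ (P pq.1 * H * P pq.1) * LinearMap.mulRight ℂ (P pq.2)
              - LinearMap.mulLeft ℂ (P pq.1) * LinearMap.mulRight ℂ (P pq.2 * H * P pq.2)) := by
    intro ω
    rw [h𝒬]
    rw [Finset.sum_mul, Finset.sum_mul]
    refine Finset.sum_congr rfl fun pq hpq => ?_
    rw [Finset.mul_sum]
    have hpq' : ε pq.1 - ε pq.2 = ω := (Finset.mem_filter.mp hpq).2
    have hdiag : ∀ cd ∈ univ.filter fun cd : Fin r × Fin r => ε cd.1 - ε cd.2 = ω,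
        (LinearMap.mulLeft ℂ (P pq.1) * LinearMap.mulRight ℂ (P pq.2))
          * (LinearMap.mulLeft ℂ H - LinearMap.mulRight ℂ H)
          * (LinearMap.mulLeft ℂ (P cd.1) * LinearMap.mulRight ℂ (P cd.2))
        = if cd = pq then
            LinearMap.mulLeft ℂ (P pq.1 * H * P pq.1) * LinearMap.mulRight ℂ (P pq.2)
              - LinearMap.mulLeft ℂ (P pq.1) * LinearMap.mulRight ℂ (P pq.2 * H * P pq.2)
          else 0 := by
      intro cd hcd
      have hcd' : ε cd.1 - ε cd.2 = ω := (Finset.mem_filter.mp hcd).2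
      rw [hterm]
      by_cases h : cd = pq
      · subst h
        rw [if_pos rfl, hPP, hPP, if_pos rfl, if_pos rfl]
      · rw [if_neg h]
        have hne2 : cd.2 ≠ pq.2 := by
          intro h2
          apply h
          have : ε cd.1 = ε pq.1 := by
            have := hcd'.trans hpq'.symm
            rw [h2] at this; linarith
          exact Prod.ext (hε this) h2
        have hne1 : cd.1 ≠ pq.1 := by
          intro h1
          apply h
          have : ε cd.2 = ε pq.2 := by
            have := hcd'.trans hpq'.symm
            rw [h1] at this; linarith
          exact Prod.ext h1 (hε this)
        rw [hPP, hPP, if_neg hne2, if_neg (fun h' => hne1 h'.symm),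
          LinearMap.mulLeft_zero_eq_zero, LinearMap.mulRight_zero_eq_zero,
          zero_mul, mul_zero, sub_zero]
    rw [Finset.sum_congr rfl hdiag, Finset.sum_ite_eq', if_pos hpq]
  rw [Finset.sum_congr rfl fun ω _ => key ω]
  have hmaps : ∀ pq : Fin r × Fin r, pq ∈ (univ : Finset (Fin r × Fin r)) →
      ε pq.1 - ε pq.2 ∈ Ω := by
    intro pq _
    rw [hΩ]
    exact Finset.mem_image.mpr ⟨pq, Finset.mem_univ _, rfl⟩
  rw [Finset.sum_fiberwise_of_maps_to hmaps]
  rw [Finset.sum_sub_distrib]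
  have hL : ∀ X : Matrix (Fin n) (Fin n) ℂ,
      (∑ pq : Fin r × Fin r,
        LinearMap.mulLeft ℂ (P pq.1 * X * P pq.1) * LinearMap.mulRight ℂ (P pq.2))
      = LinearMap.mulLeft ℂ (∑ p, P p * X * P p) := by
    intro X
    apply LinearMap.ext; intro A
    simp only [LinearMap.sum_apply, Module.End.mul_apply, LinearMap.mulLeft_apply,
      LinearMap.mulRight_apply, Fintype.sum_prod_type]
    rw [Finset.sum_mul]
    refine Finset.sum_congr rfl fun p _ => ?_
    simp [← Finset.mul_sum, hPsum]
  have hR : (∑ pq : Fin r × Fin r,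
        LinearMap.mulLeft ℂ (P pq.1) * LinearMap.mulRight ℂ (P pq.2 * H * P pq.2))
      = LinearMap.mulRight ℂ (∑ p, P p * H * P p) := by
    apply LinearMap.ext; intro A
    simp only [LinearMap.sum_apply, Module.End.mul_apply, LinearMap.mulLeft_apply,
      LinearMap.mulRight_apply, Fintype.sum_prod_type]
    rw [Finset.mul_sum]
    rw [Finset.sum_comm]
    refine Finset.sum_congr rfl fun q _ => ?_
    simp [← Finset.sum_mul, hPsum]
  rw [hL H, hR]
end
end

section
/- Quantum Zeno dynamics by fast oscillations projecting an arbitrary generator: let K be an n×n Hermitian complex matrix with spectral resolution K = Σ_n ε_n P_n, let 𝒦 = [K, •] be its commutator superoperator, and define for each transition frequency ω ∈ Ω = {ε_m − ε_n} the projection 𝒫_ω(A) = Σ_{(m,n) : ε_m − ε_n = ω} P_m A P_n. Let ℒ be an arbitrary linear endomorphism of the space of n×n complex matrices and set ℒ_Z = Σ_{ω ∈ Ω} 𝒫_ω ∘ ℒ ∘ 𝒫_ω. Then for every T > 0 there exists a constant c ≥ 0 such that for all γ ≥ 1 and all t ∈ [0, T], ‖exp(t(−iγ𝒦 + ℒ))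 − exp(−itγ𝒦)∘exp(tℒ_Z)‖ ≤ c/γ. -/
/-!
Pass to the interaction picture `W s = exp (-s H) exp (s (H + ℒ))` with `H = -iγ𝒦`. It solves
`W' = M s W` where `M s = exp (-s H) ℒ exp (s H)`; expanding `exp (s H)` in the spectral
projections `𝒬 ω` of `𝒦` gives `M s = ℒ_Z + Σ_{ω ≠ ω'} e^{iγ(ω - ω')s} 𝒬 ω ℒ 𝒬 ω'`, with
`‖M s‖` bounded independently of `γ`, hence (Grönwall) so is `W`. By Duhamel's formula
`W t - exp (t ℒ_Z)` is a sum of integrals of `e^{iγ(ω - ω')s}` against `C¹` functions with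
`γ`-independent bounds, and one integration by parts makes each of them `O(1/γ)`.
-/

attribute [local instance] Matrix.linftyOpNormedRing Matrix.linftyOpNormedAlgebra

open NormedSpace Finset

noncomputable section

instance matCLMNormedRing (n : ℕ) :
    NormedRing (Matrix (Fin n) (Fin n) ℂ →L[ℂ] Matrix (Fin n) (Fin n) ℂ) :=
  ContinuousLinearMap.toNormedRing

instance matCLMIsTopologicalRing (n : ℕ) :
    IsTopologicalRing (Matrix (Fin n) (Fin n) ℂ →L[ℂ] Matrix (Fin n) (Fin n) ℂ) :=
  NonUnitalSeminormedRing.toIsTopologicalRing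

section Idempotents

variable {R : Type*} [Semiring R] {κ : Type*} [Fintype κ] {T : κ → R}

theorem CompleteOrthogonalIdempotents.sum_fiber {β : Type*} [DecidableEq β]
    (hT : CompleteOrthogonalIdempotents T) {f : κ → β} {Ω : Finset β} (hf : ∀ k, f k ∈ Ω) :
    CompleteOrthogonalIdempotents fun ω : Ω => ∑ k with f k = ω, T k := by
  refine ⟨⟨fun ω => hT.isIdempotentElem_sum, fun ω ω' hne => ?_⟩, ?_⟩
  · dsimp only
    rw [sum_mul]
    refine sum_eq_zero fun k hk => hT.mul_sum_of_notMem ?_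
    simp only [mem_filter, mem_univ, true_and] at hk ⊢
    exact fun h => hne (Subtype.ext (hk.symm.trans h))
  · rw [sum_coe_sort Ω (fun ω => ∑ k with f k = ω, T k), sum_fiberwise_of_maps_to (fun k _ => hf k),
      hT.complete]

theorem Finset.sum_smul_eq_sum_smul_sum_fiber {S M β : Type*} [Semiring S] [AddCommMonoid M]
    [Module S M] [DecidableEq β] {f : κ → β} {Ω : Finset β} (hf : ∀ k, f k ∈ Ω) (g : β → S)
    (T : κ → M) : ∑ k, g (f k) • T k = ∑ ω ∈ Ω, g ω • ∑ k with f k = ω, T k := by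
  rw [← sum_fiberwise_of_maps_to (fun k _ => hf k)]
  refine sum_congr rfl fun ω _ => ?_
  rw [smul_sum]
  exact sum_congr rfl fun k hk => by rw [(mem_filter.1 hk).2]

theorem Finset.sum_sum_eq_sum_add_sum_offDiag {ι M : Type*} [Fintype ι] [DecidableEq ι]
    [AddCommMonoid M] (f : ι → ι → M) :
    ∑ i, ∑ j, f i j = ∑ i, f i i + ∑ p ∈ (univ : Finset ι).offDiag, f p.1 p.2 := by
  rw [← Fintype.sum_prod_type', ← univ_product_univ, ← diag_union_offDiag,
    sum_union (disjoint_diag_offDiag _), diag, sum_map]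
  rfl

end Idempotents

section Semiring

variable {R A : Type*} [CommSemiring R] [Semiring A] [Algebra R A]
  {ι : Type*} [Fintype ι] {Q : ι → A}

def CompleteOrthogonalIdempotents.sumAlgHom (hQ : CompleteOrthogonalIdempotents Q) :
    (ι → R) →ₐ[R] A := by
  classical
  exact AlgHom.ofLinearMap (Fintype.linearCombination R Q)
    (by simp [Fintype.linearCombination_apply, hQ.complete])
    (fun c d => by
      simp [Fintype.linearCombination_apply, Finset.sum_mul, Finset.mul_sum,
        hQ.mul_eq, smul_smul, mul_comm])

theorem CompleteOrthogonalIdempotents.sumAlgHom_apply (hQ : CompleteOrthogonalIdempotents Q)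
    (c : ι → R) : hQ.sumAlgHom c = ∑ i, c i • Q i := by
  simp [sumAlgHom, Fintype.linearCombination_apply]

open LinearMap in
theorem CompleteOrthogonalIdempotents.mulLeft_mul_mulRight (hQ : CompleteOrthogonalIdempotents Q) :
    CompleteOrthogonalIdempotents fun pq : ι × ι => mulLeft R (Q pq.1) * mulRight R (Q pq.2) := by
  classical
  refine ⟨OrthogonalIdempotents.iff_mul_eq.2 fun pq pq' => ?_, ?_⟩
  · ext X
    simp only [Module.End.mul_apply, mulLeft_apply, mulRight_apply]
    rw [show Q pq.1 * (Q pq'.1 * (X * Q pq'.2) * Q pq.2)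
      = Q pq.1 * Q pq'.1 * X * (Q pq'.2 * Q pq.2) by simp only [mul_assoc], hQ.mul_eq, hQ.mul_eq]
    obtain ⟨p, q⟩ := pq
    obtain ⟨p', q'⟩ := pq'
    by_cases hp : p = p' <;> by_cases hq : q = q' <;> simp [hp, hq, mul_assoc, @eq_comm _ q']
  · ext X
    simp [Fintype.sum_prod_type, LinearMap.sum_apply, ← sum_mul, ← mul_sum, hQ.complete]

end Semiring

section Ring

variable {R A : Type*} [CommRing R] [Ring A] [Algebra R A] {ι : Type*} [Fintype ι] {P : ι → A}

open LinearMap in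
theorem CompleteOrthogonalIdempotents.mulLeft_sub_mulRight_sum_smul
    (hP : CompleteOrthogonalIdempotents P) (ε : ι → R) :
    mulLeft R (∑ p, ε p • P p) - mulRight R (∑ p, ε p • P p)
      = ∑ pq : ι × ι, (ε pq.1 - ε pq.2) • (mulLeft R (P pq.1) * mulRight R (P pq.2)) := by
  refine LinearMap.ext fun X => ?_
  simp only [LinearMap.sub_apply, mulLeft_apply, mulRight_apply, LinearMap.sum_apply,
    LinearMap.smul_apply, Module.End.mul_apply,
    Fintype.sum_prod_type, sub_smul, sum_sub_distrib]
  congr 1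
  · simp only [← mul_sum, ← smul_sum, hP.complete, mul_one, sum_mul, smul_mul_assoc]
  · rw [sum_comm]
    simp only [← smul_sum, ← sum_mul, hP.complete, one_mul, mul_sum, mul_smul_comm]

end Ring

section Gronwall

variable {E : Type*} [NormedRing E] [NormedSpace ℝ E]

theorem norm_le_mul_exp_of_hasDerivAt_mul {W M : ℝ → E} {m : ℝ}
    (hW : ∀ s, HasDerivAt W (M s * W s) s) (hM : ∀ s, ‖M s‖ ≤ m) {s : ℝ} (hs : 0 ≤ s) :
    ‖W s‖ ≤ ‖W 0‖ * Real.exp (m * s) := by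
  have h := norm_le_gronwallBound_of_norm_deriv_right_le (ε := 0)
    (fun x _ => (hW x).continuousAt.continuousWithinAt) (fun x _ => (hW x).hasDerivWithinAt)
    le_rfl (fun x _ => (norm_mul_le _ _).trans (by
      rw [add_zero]; exact mul_le_mul_of_nonneg_right (hM x) (norm_nonneg _))) s ⟨hs, le_rfl⟩
  rwa [gronwallBound_ε0, sub_zero] at h

end Gronwall

section RealBanachAlgebra

variable {E : Type*} [NormedRing E] [NormedAlgebra ℝ E] [CompleteSpace E]

theorem exp_smul_mul_exp_neg_smul (x : E) (s : ℝ) : exp (s • x) * exp (-s • x) = 1 := by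
  let _ : NormedAlgebra ℚ E := NormedAlgebra.restrictScalars ℚ ℝ E
  rw [neg_smul, ← exp_add_of_commute (Commute.refl _).neg_right, add_neg_cancel, exp_zero]

theorem hasDerivAt_exp_neg_smul_mul_exp_smul_add (H L : E) (s : ℝ) :
    HasDerivAt (fun s : ℝ => exp (-s • H) * exp (s • (H + L)))
      (exp (-s • H) * L * exp (s • H) * (exp (-s • H) * exp (s • (H + L)))) s := by
  have hH : HasDerivAt (fun s : ℝ => exp (-s • H)) (exp (-s • H) * -H) s := by
    simpa [neg_smul, smul_neg] using hasDerivAt_exp_smul_const (-H) s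
  refine (hH.mul (hasDerivAt_exp_smul_const' (H + L) s)).congr_deriv ?_
  rw [mul_assoc _ (exp (s • H)), ← mul_assoc (exp (s • H)), exp_smul_mul_exp_neg_smul, one_mul]
  noncomm_ring

theorem norm_exp_smul_le (N : E) {u : ℝ} (hu : 0 ≤ u) :
    ‖exp (u • N)‖ ≤ ‖(1 : E)‖ * Real.exp (‖N‖ * u) := by
  simpa using norm_le_mul_exp_of_hasDerivAt_mul (fun s => hasDerivAt_exp_smul_const' N s)
    (fun _ => le_rfl) hu

theorem hasDerivAt_exp_sub_smul (N : E) (t s : ℝ) :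
    HasDerivAt (fun s : ℝ => exp ((t - s) • N)) (-(N * exp ((t - s) • N))) s := by
  simpa [Function.comp_def] using
    (hasDerivAt_exp_smul_const' N (t - s)).scomp s ((hasDerivAt_id s).const_sub t)

theorem sub_exp_smul_mul_eq_integral {W M : ℝ → E} (N : E)
    (hW : ∀ s, HasDerivAt W (M s * W s) s) (hM : Continuous M) (t : ℝ) :
    W t - exp (t • N) * W 0 = ∫ s in 0..t, exp ((t - s) • N) * ((M s - N) * W s) := by
  let _ : NormedAlgebra ℚ E := NormedAlgebra.restrictScalars ℚ ℝ E
  have hcommute : ∀ u : ℝ, N * exp (u • N) = exp (u • N) * N := fun u =>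
    ((Commute.refl N).smul_right u).exp_right.eq
  have hderiv : ∀ s : ℝ, HasDerivAt (fun s => exp ((t - s) • N) * W s)
      (exp ((t - s) • N) * ((M s - N) * W s)) s := fun s => by
    refine ((hasDerivAt_exp_sub_smul N t s).mul (hW s)).congr_deriv ?_
    rw [hcommute]
    noncomm_ring
  have hWc : Continuous W := continuous_iff_continuousAt.2 fun s => (hW s).continuousAt
  have hint : Continuous fun s => exp ((t - s) • N) * ((M s - N) * W s) := by fun_prop
  rw [intervalIntegral.integral_eq_sub_of_hasDerivAt (fun s _ => hderiv s)
    (hint.intervalIntegrable _ _)]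
  simp

end RealBanachAlgebra

section Oscillatory

variable {E : Type*} [NormedAddCommGroup E] [NormedSpace ℂ E] [CompleteSpace E]

theorem norm_integral_exp_mul_I_smul_le {F F' : ℝ → E} {l t A B : ℝ} (hl : l ≠ 0)
    (ht : 0 ≤ t) (hF : ∀ s, HasDerivAt F (F' s) s) (hF' : Continuous F')
    (hA : ∀ s ∈ Set.Icc 0 t, ‖F s‖ ≤ A) (hB : ∀ s ∈ Set.Icc 0 t, ‖F' s‖ ≤ B) :
    ‖∫ s in 0..t, Complex.exp ((l * s : ℝ) * Complex.I) • F s‖ ≤ (2 * A + t * B) / |l| := by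
  set e : ℝ → ℂ := fun s => Complex.exp ((l * s : ℝ) * Complex.I)
  -- integrating by parts against the primitive `u` of the phase moves the derivative onto `F`
  set u : ℝ → ℂ := fun s => (l * Complex.I)⁻¹ * e s
  have hl' : (l : ℂ) ≠ 0 := by exact_mod_cast hl
  have he : ∀ s, HasDerivAt e (e s * (l * Complex.I)) s := fun s => by
    have := (((hasDerivAt_id s).const_mul l).ofReal_comp.mul_const Complex.I).cexp
    simpa [e] using this
  have hu : ∀ s, HasDerivAt u (e s) s := fun s => by
    refine ((he s).const_mul _).congr_deriv ?_
    field_simp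
  have he_cont : Continuous e := by fun_prop
  have hparts := intervalIntegral.integral_smul_deriv_eq_deriv_smul (a := 0) (b := t)
    (fun s _ => hu s) (fun s _ => hF s) (he_cont.intervalIntegrable _ _) (hF'.intervalIntegrable _ _)
  have hnorm_e : ∀ s, ‖e s‖ = 1 := fun s => Complex.norm_exp_ofReal_mul_I _
  have hnorm_u : ∀ s, ‖u s‖ = |l|⁻¹ := fun s => by
    simp [u, hnorm_e, Complex.norm_real]
  have hend : ∀ s ∈ Set.Icc 0 t, ‖u s • F s‖ ≤ A / |l| := fun s hs => by
    rw [norm_smul, hnorm_u, inv_mul_eq_div]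
    exact div_le_div_of_nonneg_right (hA s hs) (abs_nonneg l)
  have hrest : ‖∫ s in 0..t, u s • F' s‖ ≤ B / |l| * |t - 0| :=
    intervalIntegral.norm_integral_le_of_norm_le_const fun s hs => by
      rw [Set.uIoc_of_le ht] at hs
      rw [norm_smul, hnorm_u, inv_mul_eq_div]
      exact div_le_div_of_nonneg_right (hB s (Set.Ioc_subset_Icc_self hs)) (abs_nonneg l)
  have heq : ∫ s in 0..t, e s • F s = u t • F t - u 0 • F 0 - ∫ s in 0..t, u s • F' s := by
    rw [hparts]; abel
  calc ‖∫ s in 0..t, e s • F s‖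
      ≤ ‖u t • F t‖ + ‖u 0 • F 0‖ + ‖∫ s in 0..t, u s • F' s‖ := by
        rw [heq]; exact (norm_sub_le _ _).trans (add_le_add_left (norm_sub_le _ _) _)
    _ ≤ A / |l| + A / |l| + B / |l| * |t - 0| := by
        gcongr
        · exact hend t ⟨ht, le_rfl⟩
        · exact hend 0 ⟨le_rfl, ht⟩
    _ = (2 * A + t * B) / |l| := by
        rw [sub_zero, abs_of_nonneg ht]; ring

end Oscillatory

section Averaging

variable {E : Type*} [NormedRing E] [NormedAlgebra ℂ E] [CompleteSpace E]

theorem norm_integral_exp_smul_exp_sub_smul_mul_le {W M : ℝ → E} {N C : E} {l m T t : ℝ}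
    (hW : ∀ s, HasDerivAt W (M s * W s) s) (hW0 : W 0 = 1) (hMc : Continuous M)
    (hMle : ∀ s, ‖M s‖ ≤ m) (hl : l ≠ 0) (ht : t ∈ Set.Icc 0 T) :
    ‖∫ s in 0..t, Complex.exp ((l * s : ℝ) * Complex.I) • (exp ((t - s) • N) * (C * W s))‖
      ≤ (2 + T * (‖N‖ + m)) * (‖(1 : E)‖ * Real.exp (‖N‖ * T)) *
        (‖(1 : E)‖ * Real.exp (m * T)) * ‖C‖ / |l| := by
  let _ : NormedAlgebra ℚ E := NormedAlgebra.restrictScalars ℚ ℂ E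
  have hm : 0 ≤ m := (norm_nonneg _).trans (hMle 0)
  have hWc : Continuous W := continuous_iff_continuousAt.2 fun s => (hW s).continuousAt
  have hV_le : ∀ s ∈ Set.Icc 0 t, ‖exp ((t - s) • N)‖ ≤ ‖(1 : E)‖ * Real.exp (‖N‖ * T) :=
    fun s hs => (norm_exp_smul_le N (sub_nonneg.2 hs.2)).trans (by gcongr; linarith [hs.1, ht.2])
  have hW_le : ∀ s ∈ Set.Icc 0 t, ‖W s‖ ≤ ‖(1 : E)‖ * Real.exp (m * T) := fun s hs => by
    refine (norm_le_mul_exp_of_hasDerivAt_mul hW hMle hs.1).trans ?_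
    rw [hW0]; gcongr; exact hs.2.trans ht.2
  set a := ‖(1 : E)‖ * Real.exp (‖N‖ * T)
  set b := ‖(1 : E)‖ * Real.exp (m * T)
  have hF : ∀ s, HasDerivAt (fun s => exp ((t - s) • N) * (C * W s))
      (exp ((t - s) • N) * (C * (M s * W s)) - N * exp ((t - s) • N) * (C * W s)) s := fun s =>
    ((hasDerivAt_exp_sub_smul N t s).mul ((hW s).const_mul C)).congr_deriv (by noncomm_ring)
  refine (norm_integral_exp_mul_I_smul_le (A := a * (‖C‖ * b))
    (B := a * (‖C‖ * (m * b)) + ‖N‖ * a * (‖C‖ * b)) hl ht.1 hF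
    (by fun_prop) (fun s hs => ?_) (fun s hs => ?_)).trans ?_
  · calc _ ≤ ‖exp ((t - s) • N)‖ * (‖C‖ * ‖W s‖) :=
          (norm_mul_le _ _).trans (by gcongr; exact norm_mul_le _ _)
      _ ≤ a * (‖C‖ * b) := by gcongr; exacts [hV_le s hs, hW_le s hs]
  · have hMW : ‖M s * W s‖ ≤ m * b :=
      (norm_mul_le _ _).trans (mul_le_mul (hMle s) (hW_le s hs) (norm_nonneg _) hm)
    refine (norm_sub_le _ _).trans (add_le_add ?_ ?_)
    · calc _ ≤ ‖exp ((t - s) • N)‖ * (‖C‖ * ‖M s * W s‖) :=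
            (norm_mul_le _ _).trans (by gcongr; exact norm_mul_le _ _)
        _ ≤ a * (‖C‖ * (m * b)) := by gcongr; exact hV_le s hs
    · calc _ ≤ ‖N‖ * ‖exp ((t - s) • N)‖ * (‖C‖ * ‖W s‖) :=
            (norm_mul_le _ _).trans (by gcongr <;> exact norm_mul_le _ _)
        _ ≤ ‖N‖ * a * (‖C‖ * b) := by gcongr; exacts [hV_le s hs, hW_le s hs]
  · have ha : 0 ≤ a := by positivity
    have hb : 0 ≤ b := by positivity
    rw [show 2 * (a * (‖C‖ * b)) + t * (a * (‖C‖ * (m * b)) + ‖N‖ * a * (‖C‖ * b))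
      = (2 + t * (‖N‖ + m)) * a * b * ‖C‖ by ring]
    gcongr
    exact ht.2

theorem norm_sub_exp_smul_le_of_hasDerivAt {κ : Type*} (S : Finset κ) {W M : ℝ → E} {N : E}
    {C : κ → E} {l : κ → ℝ} {m T t : ℝ} (hW : ∀ s, HasDerivAt W (M s * W s) s) (hW0 : W 0 = 1)
    (hM : ∀ s, M s = N + ∑ k ∈ S, Complex.exp ((l k * s : ℝ) * Complex.I) • C k)
    (hl : ∀ k ∈ S, l k ≠ 0) (hMle : ∀ s, ‖M s‖ ≤ m) (ht : t ∈ Set.Icc 0 T) :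
    ‖W t - exp (t • N)‖ ≤ ∑ k ∈ S, (2 + T * (‖N‖ + m)) * (‖(1 : E)‖ * Real.exp (‖N‖ * T)) *
      (‖(1 : E)‖ * Real.exp (m * T)) * ‖C k‖ / |l k| := by
  let _ : NormedAlgebra ℚ E := NormedAlgebra.restrictScalars ℚ ℂ E
  have hMc : Continuous M := by
    rw [funext hM]; fun_prop
  have hWc : Continuous W := continuous_iff_continuousAt.2 fun s => (hW s).continuousAt
  have hsplit : ∀ s, exp ((t - s) • N) * ((M s - N) * W s) = ∑ k ∈ S,
      Complex.exp ((l k * s : ℝ) * Complex.I) • (exp ((t - s) • N) * (C k * W s)) := fun s => by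
    simp only [hM, add_sub_cancel_left, Finset.sum_mul, Finset.mul_sum, smul_mul_assoc,
      mul_smul_comm]
  have hduhamel := sub_exp_smul_mul_eq_integral N hW hMc t
  rw [hW0, mul_one, intervalIntegral.integral_congr fun s _ => hsplit s,
    intervalIntegral.integral_finsetSum fun k _ => by
      apply Continuous.intervalIntegrable; fun_prop] at hduhamel
  rw [hduhamel]
  exact (norm_sum_le _ _).trans (Finset.sum_le_sum fun k hk =>
    norm_integral_exp_smul_exp_sub_smul_mul_le hW hW0 hMc hMle (hl k hk) ht)

end Averaging


section Spectral

variable {E : Type*} [NormedRing E] [NormedAlgebra ℂ E]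
  {ι : Type*} [Fintype ι] {Q : ι → E}

theorem CompleteOrthogonalIdempotents.exp_sum_smul (hQ : CompleteOrthogonalIdempotents Q)
    (c : ι → ℂ) : exp (∑ i, c i • Q i) = ∑ i, Complex.exp (c i) • Q i := by
  let _ : NormedAlgebra ℚ E := NormedAlgebra.restrictScalars ℚ ℂ E
  have hcont : Continuous (hQ.sumAlgHom (R := ℂ)) :=
    LinearMap.continuous_of_finiteDimensional (hQ.sumAlgHom (R := ℂ)).toLinearMap
  rw [← hQ.sumAlgHom_apply, ← map_exp _ hcont, hQ.sumAlgHom_apply]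
  simp [Complex.exp_eq_exp_ℂ]

theorem CompleteOrthogonalIdempotents.exp_smul_sum_smul (hQ : CompleteOrthogonalIdempotents Q)
    (ν : ι → ℝ) (z : ℂ) :
    exp (z • ∑ i, (ν i : ℂ) • Q i) = ∑ i, Complex.exp (z * ν i) • Q i := by
  simp only [smul_sum, smul_smul, hQ.exp_sum_smul]

theorem CompleteOrthogonalIdempotents.norm_exp_smul_smul_sum_smul_le
    (hQ : CompleteOrthogonalIdempotents Q) (ν : ι → ℝ) {z : ℂ} (hz : z.re = 0) (s : ℝ) :
    ‖exp (s • z • ∑ i, (ν i : ℂ) • Q i)‖ ≤ ∑ i, ‖Q i‖ := by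
  rw [← Complex.coe_smul, smul_smul, hQ.exp_smul_sum_smul]
  refine (norm_sum_le _ _).trans (sum_le_sum fun i _ => ?_)
  simp [norm_smul, Complex.norm_exp, hz]

theorem CompleteOrthogonalIdempotents.exp_smul_mul_mul_exp_neg_smul
    (hQ : CompleteOrthogonalIdempotents Q) (ν : ι → ℝ) (z : ℂ) (L : E) :
    exp (z • ∑ i, (ν i : ℂ) • Q i) * L * exp (-z • ∑ i, (ν i : ℂ) • Q i)
      = ∑ i, ∑ j, Complex.exp (z * (ν i - ν j)) • (Q i * L * Q j) := by
  rw [hQ.exp_smul_sum_smul, hQ.exp_smul_sum_smul, sum_mul, sum_mul]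
  refine sum_congr rfl fun i _ => ?_
  rw [mul_sum]
  refine sum_congr rfl fun j _ => ?_
  rw [smul_mul_assoc, smul_mul_assoc, mul_smul_comm, smul_smul, ← Complex.exp_add]
  ring_nf

theorem CompleteOrthogonalIdempotents.exp_neg_smul_mul_mul_exp_smul_eq_add_sum_offDiag
    [DecidableEq ι] (hQ : CompleteOrthogonalIdempotents Q) (ν : ι → ℝ) (L : E) (γ s : ℝ) :
    exp (-s • (-(Complex.I * γ)) • ∑ i, (ν i : ℂ) • Q i) * L *
        exp (s • (-(Complex.I * γ)) • ∑ i, (ν i : ℂ) • Q i)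
      = ∑ i, Q i * L * Q i + ∑ p ∈ univ.offDiag,
          Complex.exp ((γ * (ν p.1 - ν p.2) * s : ℝ) * Complex.I) • (Q p.1 * L * Q p.2) := by
  set K := ∑ i, (ν i : ℂ) • Q i
  have hsmul : ∀ r : ℝ, r • (-(Complex.I * γ)) • K = (-(Complex.I * (r * γ : ℝ))) • K :=
    fun r => by rw [← Complex.coe_smul, smul_smul]; push_cast; ring_nf
  rw [hsmul, hsmul, show -(Complex.I * ((-s * γ : ℝ) : ℂ)) = Complex.I * (s * γ : ℝ) by
    push_cast; ring, hQ.exp_smul_mul_mul_exp_neg_smul, sum_sum_eq_sum_add_sum_offDiag]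
  simp only [sub_self, mul_zero, Complex.exp_zero, one_smul]
  congr 1
  refine sum_congr rfl fun p _ => ?_
  congr 2
  push_cast; ring

end Spectral

section Zeno

variable {E : Type*} [NormedRing E] [NormedAlgebra ℂ E] [CompleteSpace E]
  {ι : Type*} [Fintype ι] {Q : ι → E}

theorem CompleteOrthogonalIdempotents.exists_norm_exp_sub_exp_mul_exp_le_div
    (hQ : CompleteOrthogonalIdempotents Q) {ν : ι → ℝ} (hν : Function.Injective ν) (L : E)
    {T : ℝ} (hT : 0 ≤ T) :
    ∃ c ≥ (0 : ℝ), ∀ γ > (0 : ℝ), ∀ t ∈ Set.Icc 0 T,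
      ‖exp ((-(Complex.I * t * γ)) • ∑ i, (ν i : ℂ) • Q i + (t : ℂ) • L) -
          exp ((-(Complex.I * t * γ)) • ∑ i, (ν i : ℂ) • Q i) *
            exp ((t : ℂ) • ∑ i, Q i * L * Q i)‖ ≤ c / γ := by
  classical
  set K := ∑ i, (ν i : ℂ) • Q i
  set LZ := ∑ i, Q i * L * Q i
  set q := ∑ i, ‖Q i‖
  set m := q * ‖L‖ * q
  set bound : ι × ι → ℝ := fun p => (2 + T * (‖LZ‖ + m)) * (‖(1 : E)‖ * Real.exp (‖LZ‖ * T)) *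
      (‖(1 : E)‖ * Real.exp (m * T)) * ‖Q p.1 * L * Q p.2‖ / |ν p.1 - ν p.2|
  refine ⟨q * ∑ p ∈ univ.offDiag, bound p, ?_, fun γ hγ t ht => ?_⟩
  · exact mul_nonneg (sum_nonneg fun _ _ => norm_nonneg _)
      (sum_nonneg fun p _ => by dsimp only [bound, m, q]; positivity)
  set H : E := (-(Complex.I * γ)) • K
  have hMle : ∀ s : ℝ, ‖exp (-s • H) * L * exp (s • H)‖ ≤ m := fun s =>
    (norm_mul_le _ _).trans (mul_le_mul ((norm_mul_le _ _).trans (mul_le_mul_of_nonneg_right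
      (hQ.norm_exp_smul_smul_sum_smul_le ν (by simp) _) (norm_nonneg _)))
      (hQ.norm_exp_smul_smul_sum_smul_le ν (by simp) _) (norm_nonneg _) (by positivity))
  have hl : ∀ p ∈ (univ : Finset ι).offDiag, γ * (ν p.1 - ν p.2) ≠ 0 := fun p hp =>
    mul_ne_zero hγ.ne' (sub_ne_zero.2 (hν.ne (mem_offDiag.1 hp).2.2))
  have havg := norm_sub_exp_smul_le_of_hasDerivAt (univ : Finset ι).offDiag
    (hasDerivAt_exp_neg_smul_mul_exp_smul_add H L) (by simp)
    (hQ.exp_neg_smul_mul_mul_exp_smul_eq_add_sum_offDiag ν L γ) hl hMle ht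
  have hH : (-(Complex.I * t * γ)) • K = t • H := by
    rw [← Complex.coe_smul, smul_smul]; ring_nf
  rw [hH, Complex.coe_smul, Complex.coe_smul, ← smul_add,
    ← one_mul (exp (t • (H + L))), ← exp_smul_mul_exp_neg_smul H t, mul_assoc, ← mul_sub]
  calc _ ≤ ‖exp (t • H)‖ * ‖exp (-t • H) * exp (t • (H + L)) - exp (t • LZ)‖ := norm_mul_le _ _
    _ ≤ q * ∑ p ∈ (univ : Finset ι).offDiag, bound p / γ := by
      refine mul_le_mul (hQ.norm_exp_smul_smul_sum_smul_le ν (by simp) t)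
        (havg.trans_eq (sum_congr rfl fun p _ => ?_)) (norm_nonneg _) (by positivity)
      rw [abs_mul, abs_of_pos hγ, div_mul_eq_div_div_swap]
    _ = q * (∑ p ∈ (univ : Finset ι).offDiag, bound p) / γ := by rw [← sum_div, mul_div_assoc]

end Zeno



theorem qzd_fast_oscillations_superoperator_general
    {n r : ℕ} (K : Matrix (Fin n) (Fin n) ℂ)
    (ε : Fin r → ℝ)
    (P : Fin r → Matrix (Fin n) (Fin n) ℂ)
    (hPP : ∀ p q, P p * P q = if p = q then P p else 0)
    (hPsum : ∑ p, P p = 1)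
    (hKspec : K = ∑ p, (ε p : ℂ) • P p)
    (𝒦 : Matrix (Fin n) (Fin n) ℂ →L[ℂ] Matrix (Fin n) (Fin n) ℂ)
    (h𝒦 : 𝒦 = LinearMap.toContinuousLinearMap
      (LinearMap.mulLeft ℂ K - LinearMap.mulRight ℂ K))
    (Ω : Finset ℝ)
    (hΩ : Ω = Finset.image (fun pq : Fin r × Fin r => ε pq.1 - ε pq.2) Finset.univ)
    (𝒬 : ℝ → (Matrix (Fin n) (Fin n) ℂ →L[ℂ] Matrix (Fin n) (Fin n) ℂ))
    (h𝒬 : ∀ ω : ℝ, 𝒬 ω = LinearMap.toContinuousLinearMap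
      (∑ pq ∈ univ.filter fun pq : Fin r × Fin r => ε pq.1 - ε pq.2 = ω,
        LinearMap.mulLeft ℂ (P pq.1) * LinearMap.mulRight ℂ (P pq.2)))
    (ℒ : Matrix (Fin n) (Fin n) ℂ →L[ℂ] Matrix (Fin n) (Fin n) ℂ) :
    ∀ T > (0 : ℝ), ∃ c ≥ (0 : ℝ), ∀ γ ≥ (1 : ℝ), ∀ t ∈ Set.Icc (0 : ℝ) T,
      ‖exp ((-(Complex.I * t * γ)) • 𝒦 + (t : ℂ) • ℒ) -
          exp ((-(Complex.I * t * γ)) • 𝒦) *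
            exp ((t : ℂ) • ∑ ω ∈ Ω, 𝒬 ω * ℒ * 𝒬 ω)‖
        ≤ c / γ := by
  -- `matCLMNormedRing` carries no `ℂ`-algebra structure, and completeness must be stated for
  -- its uniformity, not the one of `ContinuousLinearMap`
  have _ : @CompleteSpace (Matrix (Fin n) (Fin n) ℂ →L[ℂ] Matrix (Fin n) (Fin n) ℂ)
      (matCLMNormedRing n).toUniformSpace :=
    show CompleteSpace (Matrix (Fin n) (Fin n) ℂ →L[ℂ] Matrix (Fin n) (Fin n) ℂ) from
      FiniteDimensional.complete ℂ _
  let _ : NormedAlgebra ℂ (Matrix (Fin n) (Fin n) ℂ →L[ℂ] Matrix (Fin n) (Fin n) ℂ) :=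
    ContinuousLinearMap.toNormedAlgebra
  have hP : CompleteOrthogonalIdempotents P := ⟨OrthogonalIdempotents.iff_mul_eq.2 hPP, hPsum⟩
  have hΩ_mem : ∀ pq : Fin r × Fin r, ε pq.1 - ε pq.2 ∈ Ω := fun pq =>
    hΩ ▸ mem_image_of_mem _ (mem_univ pq)
  have h𝒬_coi : CompleteOrthogonalIdempotents fun ω : Ω => 𝒬 ω := by
    simp only [h𝒬]
    exact ((hP.mulLeft_mul_mulRight (R := ℂ)).sum_fiber hΩ_mem).map
      (Module.End.toContinuousLinearMap _).toRingHom
  have h𝒦_spec : 𝒦 = ∑ ω : Ω, ((ω : ℝ) : ℂ) • 𝒬 ω := by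
    rw [h𝒦, hKspec, hP.mulLeft_sub_mulRight_sum_smul, sum_coe_sort Ω fun ω => (ω : ℂ) • 𝒬 ω]
    simp only [h𝒬, ← map_smul, ← map_sum]
    congr 1
    rw [← sum_smul_eq_sum_smul_sum_fiber hΩ_mem (fun ω : ℝ => (ω : ℂ))]
    push_cast
    rfl
  intro T hT
  obtain ⟨c, hc, hbound⟩ :=
    h𝒬_coi.exists_norm_exp_sub_exp_mul_exp_le_div Subtype.val_injective ℒ hT.le
  refine ⟨c, hc, fun γ hγ t ht => ?_⟩
  rw [h𝒦_spec, ← sum_coe_sort Ω]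
  exact hbound γ (by linarith) t ht

/-- Quantum Zeno dynamics by fast oscillations, projecting an arbitrary generator:
`‖exp(t(−iγ𝒦 + ℒ)) − exp(−itγ𝒦)∘exp(tℒ_Z)‖ ≤ c/γ` uniformly for `t ∈ [0, T]`,
where `ℒ_Z = Σ_{ω ∈ Ω} 𝒬 ω ∘ ℒ ∘ 𝒬 ω`. -/
theorem qzd_fast_oscillations_superoperator
    {n r : ℕ} (K : Matrix (Fin n) (Fin n) ℂ) (hK : K.IsHermitian)
    (ε : Fin r → ℝ) (hε : Function.Injective ε)
    (P : Fin r → Matrix (Fin n) (Fin n) ℂ)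
    (hPP : ∀ p q, P p * P q = if p = q then P p else 0)
    (hPh : ∀ p, (P p).conjTranspose = P p)
    (hPsum : ∑ p, P p = 1)
    (hKspec : K = ∑ p, (ε p : ℂ) • P p)
    (𝒦 : Matrix (Fin n) (Fin n) ℂ →L[ℂ] Matrix (Fin n) (Fin n) ℂ)
    (h𝒦 : 𝒦 = LinearMap.toContinuousLinearMap
      (LinearMap.mulLeft ℂ K - LinearMap.mulRight ℂ K))
    (Ω : Finset ℝ)
    (hΩ : Ω = Finset.image (fun pq : Fin r × Fin r => ε pq.1 - ε pq.2) Finset.univ)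
    (𝒬 : ℝ → (Matrix (Fin n) (Fin n) ℂ →L[ℂ] Matrix (Fin n) (Fin n) ℂ))
    (h𝒬 : ∀ ω : ℝ, 𝒬 ω = LinearMap.toContinuousLinearMap
      (∑ pq ∈ univ.filter fun pq : Fin r × Fin r => ε pq.1 - ε pq.2 = ω,
        LinearMap.mulLeft ℂ (P pq.1) * LinearMap.mulRight ℂ (P pq.2)))
    (ℒ : Matrix (Fin n) (Fin n) ℂ →L[ℂ] Matrix (Fin n) (Fin n) ℂ) :
    ∀ T > (0 : ℝ), ∃ c ≥ (0 : ℝ), ∀ γ ≥ (1 : ℝ), ∀ t ∈ Set.Icc (0 : ℝ) T,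
      ‖exp ((-(Complex.I * t * γ)) • 𝒦 + (t : ℂ) • ℒ) -
          exp ((-(Complex.I * t * γ)) • 𝒦) *
            exp ((t : ℂ) • ∑ ω ∈ Ω, 𝒬 ω * ℒ * 𝒬 ω)‖
        ≤ c / γ :=
  qzd_fast_oscillations_superoperator_general K ε P hPP hPsum hKspec 𝒦 h𝒦 Ω hΩ 𝒬 h𝒬 ℒ
end
end

section
/- Purity decay rate vanishes only for vanishing dissipator: let L_1, …, L_r be n×n complex matrices with trace(L_i) = 0 for all i, and let D be the dissipator D(ρ) = Σ_i (L_i ρ L_i† − ½ L_i† L_i ρ − ½ ρ L_i† L_i). Define Γ = sup { −2·Re(trace(ρ·D(ρ))) : ρ a density matrix }. Then Γ ≥ 0, and Γ = 0 if and only if L_i = 0 for all i (equivalently, D = 0). -/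
/-!
Evaluating the purity decay rate on a pure state `ψψ†` turns each Lindblad term into
`2 ‖Lψ - ⟨ψ, Lψ⟩ψ‖²`, the Cauchy–Schwarz defect of `ψ` and `Lψ`. Hence `Γ ≥ 0`, and `Γ = 0` forces
every unit vector to be an eigenvector of every `L i`, so each `L i` is a scalar matrix, which
vanishes because it is traceless. The supremum is over a bounded set since density matrices have
entries of norm at most `1`.
-/

open scoped Matrix ComplexOrder

noncomputable section

namespace Matrix

variable {m : Type*} [Fintype m]

theorem re_trace_conjTranspose_mul_self (B : Matrix m m ℂ) :
    (Bᴴ * B).trace.re = ∑ j, ∑ l, ‖B l j‖ ^ 2 := by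
  simp only [trace, diag, mul_apply, conjTranspose_apply, Complex.re_sum]
  refine Finset.sum_congr rfl fun j _ => Finset.sum_congr rfl fun l _ => ?_
  rw [mul_comm, ← Complex.normSq_eq_norm_sq, Complex.star_def, Complex.mul_conj,
    Complex.ofReal_re]

open scoped MatrixOrder in
theorem PosSemidef.norm_apply_le_re_trace {A : Matrix m m ℂ} (hA : A.PosSemidef) (j k : m) :
    ‖A j k‖ ≤ A.trace.re := by
  classical
  obtain ⟨B, rfl⟩ := CStarAlgebra.nonneg_iff_eq_star_mul_self.mp hA.nonneg
  have hcol : ∀ j, ∑ l, ‖B l j‖ ^ 2 ≤ (star B * B).trace.re := fun j => by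
    rw [star_eq_conjTranspose, re_trace_conjTranspose_mul_self]
    exact Finset.single_le_sum (f := fun j => ∑ l, ‖B l j‖ ^ 2)
      (fun _ _ => by positivity) (Finset.mem_univ j)
  calc ‖(star B * B) j k‖ ≤ ∑ l, ‖B l j‖ * ‖B l k‖ := by
        rw [mul_apply]
        exact (norm_sum_le _ _).trans_eq (by simp only [star_apply, norm_mul, norm_star])
    _ ≤ ∑ l, (‖B l j‖ ^ 2 + ‖B l k‖ ^ 2) / 2 := by
        gcongr with l
        nlinarith [sq_nonneg (‖B l j‖ - ‖B l k‖)]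
    _ ≤ (star B * B).trace.re := by
        rw [← Finset.sum_div, Finset.sum_add_distrib]
        linarith [hcol j, hcol k]

theorem trace_vecMulVec_star_mul (ψ : m → ℂ) (A : Matrix m m ℂ) :
    (vecMulVec ψ (star ψ) * A).trace = star ψ ⬝ᵥ A *ᵥ ψ := by
  rw [vecMulVec_mul, trace_vecMulVec, dotProduct_comm, dotProduct_mulVec]

theorem exists_smul_star_dotProduct_self_eq_one {v : m → ℂ} (hv : v ≠ 0) :
    ∃ t : ℂ, t ≠ 0 ∧ star (t • v) ⬝ᵥ (t • v) = 1 := by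
  obtain ⟨hs, him⟩ := Complex.pos_iff.mp (dotProduct_star_self_pos_iff.mpr hv)
  set s := (star v ⬝ᵥ v).re
  have hv' : star v ⬝ᵥ v = s := Complex.ext rfl him.symm
  refine ⟨((√s)⁻¹ : ℝ), by simpa using (Real.sqrt_pos.mpr hs).ne', ?_⟩
  rw [star_smul, smul_dotProduct, dotProduct_smul, hv', Complex.star_def, Complex.conj_ofReal,
    smul_eq_mul, smul_eq_mul, ← mul_assoc]
  norm_cast
  rw [← mul_inv, Real.mul_self_sqrt hs.le, inv_mul_cancel₀ hs.ne']

/-- The component of `A ψ` orthogonal to `ψ`, when `ψ` is a unit vector. -/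
def eigenResidual (A : Matrix m m ℂ) (ψ : m → ℂ) : m → ℂ :=
  A *ᵥ ψ - (star ψ ⬝ᵥ A *ᵥ ψ) • ψ

theorem star_eigenResidual_dotProduct_self {ψ : m → ℂ} (hψ : star ψ ⬝ᵥ ψ = 1)
    (A : Matrix m m ℂ) :
    star (eigenResidual A ψ) ⬝ᵥ eigenResidual A ψ
      = star (A *ᵥ ψ) ⬝ᵥ A *ᵥ ψ - star (star ψ ⬝ᵥ A *ᵥ ψ) * (star ψ ⬝ᵥ A *ᵥ ψ) := by
  have h : star (A *ᵥ ψ) ⬝ᵥ ψ = star (star ψ ⬝ᵥ A *ᵥ ψ) := star_dotProduct _ _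
  simp only [eigenResidual, star_sub, star_smul, sub_dotProduct, dotProduct_sub,
    smul_dotProduct, dotProduct_smul, h, hψ, smul_eq_mul]
  ring

theorem exists_eq_smul_one_of_eigenResidual_eq_zero [DecidableEq m] {A : Matrix m m ℂ}
    (h : ∀ ψ, star ψ ⬝ᵥ ψ = 1 → eigenResidual A ψ = 0) : ∃ c : ℂ, A = c • 1 := by
  obtain ⟨c, hc⟩ := (toLin' A).exists_eq_smul_id_of_forall_notLinearIndependent fun v => by
    rcases eq_or_ne v 0 with rfl | hv
    · simp [linearIndependent_fin2]
    obtain ⟨t, ht, hψ⟩ := exists_smul_star_dotProduct_self_eq_one hv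
    obtain ⟨c, hc⟩ : ∃ c : ℂ, A *ᵥ (t • v) = c • (t • v) := ⟨_, sub_eq_zero.mp (h _ hψ)⟩
    rw [mulVec_smul, smul_comm] at hc
    rw [LinearIndependent.pair_iff' hv, not_forall, toLin'_apply]
    exact ⟨c, not_not.mpr (smul_right_injective _ ht hc).symm⟩
  refine ⟨c, toLin'.injective ?_⟩
  rw [hc, map_smul, toLin'_one]
  rfl

theorem smul_one_eq_zero_of_trace_eq_zero {K : Type*} [Field K] [CharZero K] [DecidableEq m]
    {c : K} (h : (c • (1 : Matrix m m K)).trace = 0) : c • (1 : Matrix m m K) = 0 := by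
  rcases isEmpty_or_nonempty m with hm | hm
  · exact Subsingleton.elim _ _
  · rw [trace_smul, trace_one, smul_eq_mul, mul_eq_zero, Nat.cast_eq_zero] at h
    rw [h.resolve_right Fintype.card_ne_zero, zero_smul]

end Matrix

open Matrix

variable {m ι : Type*} [Fintype m] [Fintype ι]

variable (m) in
def densityMatrices : Set (Matrix m m ℂ) :=
  {ρ | ρ.PosSemidef ∧ ρ.trace = 1}

theorem vecMulVec_mem_densityMatrices {ψ : m → ℂ} (hψ : star ψ ⬝ᵥ ψ = 1) :
    vecMulVec ψ (star ψ) ∈ densityMatrices m :=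
  ⟨posSemidef_vecMulVec_self_star ψ, by rw [trace_vecMulVec, dotProduct_comm, hψ]⟩

theorem densityMatrices_subset_pi_closedBall :
    densityMatrices m ⊆ Set.univ.pi fun _ => Set.univ.pi fun _ => Metric.closedBall 0 1 := by
  rintro ρ ⟨hρ, htr⟩ j - k -
  simpa [htr] using hρ.norm_apply_le_re_trace j k

def lindbladTerm (A ρ : Matrix m m ℂ) : Matrix m m ℂ :=
  A * ρ * Aᴴ - (2 : ℂ)⁻¹ • (Aᴴ * A * ρ) - (2 : ℂ)⁻¹ • (ρ * (Aᴴ * A))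

def dissipator (L : ι → Matrix m m ℂ) (ρ : Matrix m m ℂ) : Matrix m m ℂ :=
  ∑ i, lindbladTerm (L i) ρ

def purityDecay (L : ι → Matrix m m ℂ) (ρ : Matrix m m ℂ) : ℝ :=
  -2 * (ρ * dissipator L ρ).trace.re

theorem trace_vecMulVec_mul_lindbladTerm {ψ : m → ℂ} (hψ : star ψ ⬝ᵥ ψ = 1)
    (A : Matrix m m ℂ) :
    (vecMulVec ψ (star ψ) * lindbladTerm A (vecMulVec ψ (star ψ))).trace
      = -(star (eigenResidual A ψ) ⬝ᵥ eigenResidual A ψ) := by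
  have hadj : ∀ u, star ψ ⬝ᵥ Aᴴ *ᵥ u = star (A *ᵥ ψ) ⬝ᵥ u := fun u => by
    rw [dotProduct_mulVec, star_mulVec]
  simp only [lindbladTerm, mul_sub, Matrix.mul_smul, trace_sub, trace_smul,
    trace_vecMulVec_star_mul, ← mulVec_mulVec, vecMulVec_mulVec, op_smul_eq_smul, mulVec_smul,
    dotProduct_smul, hψ, hadj, star_dotProduct (A *ᵥ ψ) ψ,
    star_eigenResidual_dotProduct_self hψ, smul_eq_mul]
  ring

theorem purityDecay_vecMulVec {ψ : m → ℂ} (hψ : star ψ ⬝ᵥ ψ = 1) (L : ι → Matrix m m ℂ) :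
    purityDecay L (vecMulVec ψ (star ψ))
      = 2 * ∑ i, (star (eigenResidual (L i) ψ) ⬝ᵥ eigenResidual (L i) ψ).re := by
  simp only [purityDecay, dissipator, Matrix.mul_sum, trace_sum,
    trace_vecMulVec_mul_lindbladTerm hψ, Complex.re_sum, Complex.neg_re, Finset.sum_neg_distrib]
  ring

theorem eigenResidual_eq_zero_of_purityDecay_vecMulVec_nonpos {ψ : m → ℂ}
    (hψ : star ψ ⬝ᵥ ψ = 1) {L : ι → Matrix m m ℂ}
    (h : purityDecay L (vecMulVec ψ (star ψ)) ≤ 0) (i : ι) : eigenResidual (L i) ψ = 0 := by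
  have hnonneg : ∀ j, 0 ≤ (star (eigenResidual (L j) ψ) ⬝ᵥ eigenResidual (L j) ψ).re :=
    fun j => (Complex.nonneg_iff.mp (dotProduct_star_self_nonneg _)).1
  rw [purityDecay_vecMulVec hψ] at h
  have hre := (Finset.sum_eq_zero_iff_of_nonneg fun j _ => hnonneg j).mp
    (le_antisymm (by linarith) (Finset.sum_nonneg fun j _ => hnonneg j)) i (Finset.mem_univ i)
  have him := (Complex.nonneg_iff.mp (dotProduct_star_self_nonneg (eigenResidual (L i) ψ))).2
  exact dotProduct_star_self_eq_zero.mp (Complex.ext hre him.symm)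

theorem continuous_purityDecay (L : ι → Matrix m m ℂ) : Continuous (purityDecay L) := by
  unfold purityDecay dissipator lindbladTerm
  fun_prop

theorem bddAbove_purityDecay_image (L : ι → Matrix m m ℂ) :
    BddAbove (purityDecay L '' densityMatrices m) := by
  have hK : IsCompact (Set.univ.pi fun _ => Set.univ.pi fun _ => Metric.closedBall 0 1 :
      Set (Matrix m m ℂ)) :=
    isCompact_univ_pi fun _ => isCompact_univ_pi fun _ => isCompact_closedBall 0 1
  exact (hK.bddAbove_image (continuous_purityDecay L).continuousOn).mono
    (Set.image_mono densityMatrices_subset_pi_closedBall)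

theorem sSup_purityDecay_image_nonneg (L : ι → Matrix m m ℂ) :
    0 ≤ sSup (purityDecay L '' densityMatrices m) := by
  classical
  rcases isEmpty_or_nonempty m with hm | ⟨⟨j⟩⟩
  · refine Real.sSup_nonneg ?_
    rintro _ ⟨ρ, ⟨-, htr⟩, rfl⟩
    simp [trace] at htr
  · have hψ : star (Pi.single j 1 : m → ℂ) ⬝ᵥ Pi.single j 1 = 1 := by simp
    refine Real.sSup_nonneg' ⟨_, Set.mem_image_of_mem _ (vecMulVec_mem_densityMatrices hψ), ?_⟩
    rw [purityDecay_vecMulVec hψ]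
    exact mul_nonneg zero_le_two (Finset.sum_nonneg fun i _ =>
      (Complex.nonneg_iff.mp (dotProduct_star_self_nonneg _)).1)

/-- Purity decay rate vanishes only for a vanishing dissipator:
`Γ = sup {−2 Re tr(ρ D(ρ)) : ρ density matrix}` satisfies `Γ ≥ 0`, and `Γ = 0`
iff all the (traceless) Lindblad operators vanish. -/
theorem purity_decay_rate_zero_iff_dissipator_zero
    {n r : ℕ} (L : Fin r → Matrix (Fin n) (Fin n) ℂ)
    (htr : ∀ i, (L i).trace = 0)
    (D : Matrix (Fin n) (Fin n) ℂ → Matrix (Fin n) (Fin n) ℂ)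
    (hD : ∀ ρ, D ρ = ∑ i,
      (L i * ρ * (L i)ᴴ - (2 : ℂ)⁻¹ • ((L i)ᴴ * L i * ρ)
        - (2 : ℂ)⁻¹ • (ρ * ((L i)ᴴ * L i))))
    (Γ : ℝ)
    (hΓ : Γ = sSup {x : ℝ | ∃ ρ : Matrix (Fin n) (Fin n) ℂ,
      ρ.PosSemidef ∧ ρ.trace = 1 ∧ x = -2 * ((ρ * D ρ).trace).re}) :
    0 ≤ Γ ∧ (Γ = 0 ↔ ∀ i, L i = 0) := by
  obtain rfl : D = dissipator L := funext hD
  have hset : {x : ℝ | ∃ ρ : Matrix (Fin n) (Fin n) ℂ,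
      ρ.PosSemidef ∧ ρ.trace = 1 ∧ x = -2 * ((ρ * dissipator L ρ).trace).re}
      = purityDecay L '' densityMatrices (Fin n) := by
    ext x
    simp only [Set.mem_ofPred_eq, Set.mem_image, densityMatrices, purityDecay, and_assoc, eq_comm]
  rw [hset] at hΓ
  subst hΓ
  refine ⟨sSup_purityDecay_image_nonneg L, fun hΓ i => ?_, fun hL => ?_⟩
  · have hres : ∀ ψ, star ψ ⬝ᵥ ψ = 1 → eigenResidual (L i) ψ = 0 := fun ψ hψ =>
      eigenResidual_eq_zero_of_purityDecay_vecMulVec_nonpos hψ (hΓ ▸ le_csSup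
        (bddAbove_purityDecay_image L) (Set.mem_image_of_mem _ (vecMulVec_mem_densityMatrices hψ))) i
    obtain ⟨c, hc⟩ := exists_eq_smul_one_of_eigenResidual_eq_zero hres
    rw [hc]
    exact smul_one_eq_zero_of_trace_eq_zero (hc ▸ htr i)
  · refine le_antisymm (Real.sSup_nonpos ?_) (sSup_purityDecay_image_nonneg L)
    rintro _ ⟨ρ, -, rfl⟩
    simp [purityDecay, dissipator, lindbladTerm, hL]
end
end
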